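/- arXiv:2312.08921 — 5 statements merged into one kernel-verified Lean document; each statement's English description precedes it below -/
import Mathlib

section
/- Let q > 2 be a prime power and let a and b be two distinct elements of the finite field F_q. Define the polynomial f_{a,b}(x) = (b−a)·( ((x−a)/(b−a))^{q−2} + ((x−a)/(b−a))^{q−3} + ··· + ((x−a)/(b−a))^2 + 2·((x−a)/(b−a)) + 1 ) + a, i.e. f_{a,b}(x) = (b−a)·( Σ_{k=2}^{q−2} ((x−a)/(b−a))^k + 2·((x−a)/(b−a)) + 1 ) + a. Then the map c ↦ f_{a,b}(c) on F_q equals the transposition (a b); that is, f_{a,b}(a) = b, f_{a,b}(b) = a, and f_{a,b}(c) = c for every c ∈ F_q with c ≠ a and c ≠ b. -/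
theorem transposition_poly (F : Type*) [Field F] [Fintype F] [DecidableEq F]
    (hq : 2 < Fintype.card F) (a b : F) (hab : a ≠ b) :
    ∀ c : F,
      (b - a) * ((∑ k ∈ Finset.Icc 2 (Fintype.card F - 2), ((c - a) / (b - a)) ^ k)
          + 2 * ((c - a) / (b - a)) + 1) + a
        = Equiv.swap a b c := by
  intro c
  set q := Fintype.card F with hqdef
  have hq3 : 3 ≤ q := hq
  have hba : b - a ≠ 0 := sub_ne_zero.mpr (Ne.symm hab)
  by_cases hca : c = a
  · rw [hca, Equiv.swap_apply_left]
    have : (∑ k ∈ Finset.Icc 2 (q - 2), ((a - a) / (b - a)) ^ k) = 0 := by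
      apply Finset.sum_eq_zero
      intro k hk
      simp only [Finset.mem_Icc] at hk
      rw [sub_self, zero_div, zero_pow (by omega)]
    rw [this]
    field_simp
    ring
  · by_cases hcb : c = b
    · rw [hcb, Equiv.swap_apply_right]
      have h1 : (b - a) / (b - a) = 1 := div_self hba
      rw [h1]
      have hcard : (∑ k ∈ Finset.Icc 2 (q - 2), (1 : F) ^ k) = ((q - 3 : ℕ) : F) := by
        have h23 : q - 2 + 1 - 2 = q - 3 := by omega
        simp [Nat.card_Icc, h23]
      have hz : ((q : ℕ) : F) = 0 := by
        rw [hqdef]; exact FiniteField.cast_card_eq_zero F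
      rw [hcard, Nat.cast_sub hq3, hz]
      push_cast
      ring
    · rw [Equiv.swap_apply_of_ne_of_ne hca hcb]
      set y : F := (c - a) / (b - a) with hy
      have hy0 : y ≠ 0 := div_ne_zero (sub_ne_zero.mpr hca) hba
      have hy1 : y ≠ 1 := by
        intro h
        rw [hy, div_eq_one_iff_eq hba] at h
        exact hcb (sub_left_inj.mp h)
      have hpow : y ^ (q - 1) = 1 := FiniteField.pow_card_sub_one_eq_one y hy0
      have hgeom : (∑ k ∈ Finset.range (q - 1), y ^ k) = 0 := by
        rw [geom_sum_eq hy1, hpow, sub_self, zero_div]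
      have hsplit : (∑ k ∈ Finset.range (q - 1), y ^ k)
          = 1 + y + ∑ k ∈ Finset.Icc 2 (q - 2), y ^ k := by
        rw [Finset.range_eq_Ico]
        rw [← Finset.sum_Ico_consecutive _ (by omega : 0 ≤ 2) (by omega : 2 ≤ q - 1)]
        have : Finset.Ico 2 (q - 1) = Finset.Icc 2 (q - 2) := by
          rw [← Finset.Ico_add_one_right_eq_Icc]
          congr 1
          omega
        rw [this]
        norm_num [Finset.sum_Ico_eq_sum_range]
        ring
      have hsum : (∑ k ∈ Finset.Icc 2 (q - 2), y ^ k) = -(1 + y) := by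
        rw [hsplit] at hgeom
        linear_combination hgeom
      rw [hsum]
      have : (b - a) * y = c - a := by
        rw [hy]; field_simp
      linear_combination this
end

section
/- Let q > 2 be a prime power and let F_q be the finite field with q elements. The polynomial f(x) = x^{q−2} + x^{q−3} + ··· + x^2 + 2x + 1 (i.e. f(x) = 1 + 2x + Σ_{k=2}^{q−2} x^k) induces the transposition (0 1) on F_q: f(0) = 1, f(1) = 0, and f(c) = c for every c ∈ F_q with c ≠ 0 and c ≠ 1. -/
theorem transposition_zero_one_poly (F : Type*) [Field F] [Fintype F] [DecidableEq F]
    (hq : 2 < Fintype.card F) :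
    ∀ c : F,
      1 + 2 * c + ∑ k ∈ Finset.Icc 2 (Fintype.card F - 2), c ^ k
        = Equiv.swap (0 : F) 1 c := by
  intro c
  set q := Fintype.card F with hqdef
  by_cases h0 : c = 0
  · subst h0
    rw [Equiv.swap_apply_left]
    rw [Finset.sum_eq_zero]
    · ring
    · intro k hk
      simp only [Finset.mem_Icc] at hk
      exact zero_pow (by omega)
  by_cases h1 : c = 1
  · subst h1
    rw [Equiv.swap_apply_right]
    simp only [one_pow, Finset.sum_const, Nat.card_Icc, smul_eq_mul, mul_one]
    have h3 : (q - 2 + 1 - 2) = q - 3 := by omega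
    rw [h3]
    have hcast : ((q : ℕ) : F) = 0 := by
      simpa [hqdef] using FiniteField.cast_card_eq_zero F
    have : ((q - 3 : ℕ) : F) + 3 = (q : F) := by
      have : (q - 3) + 3 = q := by omega
      rw [← this]; push_cast; ring
    linear_combination this + hcast
  · rw [Equiv.swap_apply_of_ne_of_ne h0 h1]
    have hgeom : ∑ k ∈ Finset.range (q - 1), c ^ k = 0 := by
      have hc1 : c - 1 ≠ 0 := sub_ne_zero_of_ne h1
      have hpow : c ^ (q - 1) = 1 := FiniteField.pow_card_sub_one_eq_one c h0
      rw [geom_sum_eq (by simpa [sub_ne_zero] using h1), hpow, sub_self, zero_div]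
    have hsplit : Finset.range (q - 1) = insert 0 (insert 1 (Finset.Icc 2 (q - 2))) := by
      ext k
      simp only [Finset.mem_range, Finset.mem_insert, Finset.mem_Icc]
      omega
    rw [hsplit, Finset.sum_insert (by simp), Finset.sum_insert (by simp [Finset.mem_Icc])] at hgeom
    simp only [pow_zero, pow_one] at hgeom
    linear_combination hgeom
end

section
/- Let q > 2 be a prime power, let F_q be the finite field with q elements, and let a be a nonzero element of F_q. Carlitz's polynomial g_a(x) = −a^2 · ( ( (x−a)^{q−2} + a^{−1} )^{q−2} − a )^{q−2} induces the transposition (0 a) on F_q: g_a(0) = a, g_a(a) = 0, and g_a(c) = c for every c ∈ F_q with c ≠ 0 and c ≠ a. -/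
lemma pow_card_sub_two (F : Type*) [Field F] [Fintype F]
    (hq : 2 < Fintype.card F) (x : F) : x ^ (Fintype.card F - 2) = x⁻¹ := by
  rcases eq_or_ne x 0 with rfl | hx
  · rw [inv_zero, zero_pow]; omega
  · have h1 : x ^ (Fintype.card F - 1) = 1 := FiniteField.pow_card_sub_one_eq_one x hx
    have : x ^ (Fintype.card F - 2) * x = 1 := by
      rw [← pow_succ]
      have : Fintype.card F - 2 + 1 = Fintype.card F - 1 := by omega
      rw [this, h1]
    rw [mul_comm] at this
    exact eq_inv_of_mul_eq_one_right this

theorem carlitz_transposition (F : Type*) [Field F] [Fintype F] [DecidableEq F]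
    (hq : 2 < Fintype.card F) (a : F) (ha : a ≠ 0) :
    ∀ c : F,
      -a ^ 2 * (((c - a) ^ (Fintype.card F - 2) + a⁻¹) ^ (Fintype.card F - 2) - a)
          ^ (Fintype.card F - 2)
        = Equiv.swap (0 : F) a c := by
  intro c
  simp only [pow_card_sub_two F hq]
  rcases eq_or_ne c 0 with rfl | hc
  · rw [Equiv.swap_apply_left]
    rw [zero_sub, inv_neg, neg_add_cancel, inv_zero, zero_sub, inv_neg]
    field_simp
  rcases eq_or_ne c a with rfl | hca
  · rw [Equiv.swap_apply_right]
    rw [sub_self, inv_zero, zero_add, inv_inv, sub_self, inv_zero, mul_zero]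
  · rw [Equiv.swap_apply_of_ne_of_ne hc hca]
    have hsub : c - a ≠ 0 := sub_ne_zero.mpr hca
    have key : (c - a)⁻¹ + a⁻¹ = c / (a * (c - a)) := by
      field_simp
      ring
    have h3 : ((c - a)⁻¹ + a⁻¹)⁻¹ - a = -a ^ 2 / c := by
      rw [key, inv_div]
      field_simp
      ring
    rw [h3, inv_div]
    have hna : (-a ^ 2 : F) ≠ 0 := by simp [ha]
    field_simp
end

section
/- Let R be a finite commutative local ring with maximal ideal M whose residue field R/M is finite of cardinality q = p^n for a prime p. Let f, g, l ∈ R[x] be polynomials such that the reduction of f modulo M induces a permutation of the residue field R/M, and such that g(r) ∉ M for every r ∈ R. Then the polynomial h(x) = f(x) + (f′(x) + g(x))·(x^q − x) + p·l(x) induces a permutation of R, i.e. the map r ↦ h(r) is a bijection of R. -/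
open Polynomial

private lemma aux_field_facts (K : Type*) [Field K] [Fintype K] (p n : ℕ)
    (hcard : Fintype.card K = p ^ n) :
    ((p : ℕ) : K) = 0 ∧ ((p ^ n : ℕ) : K) = 0 ∧ ∀ x : K, x ^ (p ^ n) = x := by
  have h2 : ((p ^ n : ℕ) : K) = 0 := by
    have := FiniteField.cast_card_eq_zero K
    rwa [hcard] at this
  have h3 : ∀ x : K, x ^ (p ^ n) = x := by
    intro x; rw [← hcard]; exact FiniteField.pow_card x
  refine ⟨?_, h2, h3⟩
  rw [Nat.cast_pow] at h2
  rcases Nat.eq_zero_or_pos n with hn | hn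
  · exfalso; rw [hn, pow_zero] at h2; exact one_ne_zero h2
  · exact pow_eq_zero_iff hn.ne' |>.mp h2

theorem lift_permutation_poly (R : Type*) [CommRing R] [IsLocalRing R] [Finite R]
    (p n : ℕ) (hp : p.Prime)
    (hq : Nat.card (R ⧸ IsLocalRing.maximalIdeal R) = p ^ n)
    (f g l : R[X])
    (hf : Function.Bijective
      (fun x : R ⧸ IsLocalRing.maximalIdeal R =>
        (f.map (Ideal.Quotient.mk (IsLocalRing.maximalIdeal R))).eval x))
    (hg : ∀ r : R, g.eval r ∉ IsLocalRing.maximalIdeal R) :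
    Function.Bijective
      (fun r : R =>
        (f + (f.derivative + g) * (X ^ (p ^ n) - X) + C (p : R) * l).eval r) := by
  classical
  obtain ⟨hpK, hqK, hfrobK⟩ :
      ((p : ℕ) : R ⧸ IsLocalRing.maximalIdeal R) = 0 ∧
      ((p ^ n : ℕ) : R ⧸ IsLocalRing.maximalIdeal R) = 0 ∧
      ∀ x : R ⧸ IsLocalRing.maximalIdeal R, x ^ (p ^ n) = x := by
    haveI : Finite (R ⧸ IsLocalRing.maximalIdeal R) := Quotient.finite _
    haveI hft : Fintype (R ⧸ IsLocalRing.maximalIdeal R) := Fintype.ofFinite _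
    exact @aux_field_facts (R ⧸ IsLocalRing.maximalIdeal R)
      (Ideal.Quotient.field _) hft p n
      (by rw [← Nat.card_eq_fintype_card]; exact hq)
  have hpM : ((p : ℕ) : R) ∈ IsLocalRing.maximalIdeal R := by
    rw [← Ideal.Quotient.eq_zero_iff_mem, map_natCast]
    exact hpK
  have hqM : ((p ^ n : ℕ) : R) ∈ IsLocalRing.maximalIdeal R := by
    rw [← Ideal.Quotient.eq_zero_iff_mem, map_natCast]
    exact hqK
  have hfrob : ∀ r : R, r ^ (p ^ n) - r ∈ IsLocalRing.maximalIdeal R := by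
    intro r
    rw [← Ideal.Quotient.eq_zero_iff_mem, map_sub, map_pow, hfrobK, sub_self]
  set h : R[X] := f + (f.derivative + g) * (X ^ (p ^ n) - X) + C (p : R) * l with hh
  -- evaluating h is congruent to evaluating f mod M
  have hmodf : ∀ r : R, h.eval r - f.eval r ∈ IsLocalRing.maximalIdeal R := by
    intro r
    have hc : h.eval r - f.eval r
        = (f.derivative.eval r + g.eval r) * (r ^ (p ^ n) - r) + ((p:ℕ) : R) * l.eval r := by
      simp [hh]; push_cast; ring
    rw [hc]
    exact Ideal.add_mem _ (Ideal.mul_mem_left _ _ (hfrob r)) (Ideal.mul_mem_right _ _ hpM)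
  -- derivative of h is a unit everywhere
  have hder : ∀ r : R, IsUnit (h.derivative.eval r) := by
    intro r
    have hkey : h.derivative.eval r + g.eval r ∈ IsLocalRing.maximalIdeal R := by
      have hcalc : h.derivative.eval r + g.eval r =
          (f.derivative.derivative.eval r + g.derivative.eval r) * (r ^ (p ^ n) - r)
          + (f.derivative.eval r + g.eval r) * (((p ^ n : ℕ) : R) * r ^ (p ^ n - 1))
          + ((p : ℕ) : R) * l.derivative.eval r := by
        simp [hh, derivative_mul, derivative_X_pow]
        push_cast
        ring
      rw [hcalc]
      exact Ideal.add_mem _ (Ideal.add_mem _ (Ideal.mul_mem_left _ _ (hfrob r))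
        (Ideal.mul_mem_left _ _ (Ideal.mul_mem_right _ _ hqM)))
        (Ideal.mul_mem_right _ _ hpM)
    by_contra hnu
    have hmem : h.derivative.eval r ∈ IsLocalRing.maximalIdeal R :=
      IsLocalRing.mem_maximalIdeal _ |>.mpr hnu
    exact hg r (by simpa using Ideal.sub_mem _ hkey hmem)
  -- injectivity suffices
  rw [← Finite.injective_iff_bijective]
  intro a b hab
  simp only at hab
  -- a ≡ b mod M
  have habM : a - b ∈ IsLocalRing.maximalIdeal R := by
    have hπeval : ∀ r : R, Ideal.Quotient.mk (IsLocalRing.maximalIdeal R) (h.eval r)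
        = (f.map (Ideal.Quotient.mk (IsLocalRing.maximalIdeal R))).eval
          (Ideal.Quotient.mk (IsLocalRing.maximalIdeal R) r) := by
      intro r
      have h1 : Ideal.Quotient.mk (IsLocalRing.maximalIdeal R) (h.eval r)
          = Ideal.Quotient.mk (IsLocalRing.maximalIdeal R) (f.eval r) := by
        rw [Ideal.Quotient.mk_eq_mk_iff_sub_mem]
        exact hmodf r
      rw [h1, eval_map, Polynomial.eval₂_at_apply]
    have h2 : (f.map (Ideal.Quotient.mk (IsLocalRing.maximalIdeal R))).eval
          (Ideal.Quotient.mk (IsLocalRing.maximalIdeal R) a)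
        = (f.map (Ideal.Quotient.mk (IsLocalRing.maximalIdeal R))).eval
          (Ideal.Quotient.mk (IsLocalRing.maximalIdeal R) b) := by
      rw [← hπeval a, ← hπeval b, hab]
    have h3 := hf.injective h2
    rwa [Ideal.Quotient.mk_eq_mk_iff_sub_mem] at h3
  -- Taylor expansion
  obtain ⟨k, hk⟩ := h.binomExpansion b (a - b)
  rw [show b + (a - b) = a by ring, hab] at hk
  have hzero : (a - b) * (h.derivative.eval b + k * (a - b)) = 0 := by
    have hz : h.derivative.eval b * (a - b) + k * (a - b) ^ 2 = 0 := by
      linear_combination -hk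
    calc (a - b) * (h.derivative.eval b + k * (a - b))
        = h.derivative.eval b * (a - b) + k * (a - b) ^ 2 := by ring
      _ = 0 := hz
  have hu : IsUnit (h.derivative.eval b + k * (a - b)) := by
    by_contra hnu
    have hmem : h.derivative.eval b + k * (a - b) ∈ IsLocalRing.maximalIdeal R :=
      IsLocalRing.mem_maximalIdeal _ |>.mpr hnu
    have hm2 : h.derivative.eval b ∈ IsLocalRing.maximalIdeal R := by
      simpa using Ideal.sub_mem _ hmem (Ideal.mul_mem_left _ k habM)
    exact (IsLocalRing.mem_maximalIdeal _ |>.mp hm2) (hder b)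
  have hab0 : a - b = 0 := (hu.mul_left_eq_zero).mp hzero
  exact sub_eq_zero.mp hab0
end

section
/- Let R be a finite commutative local ring with maximal ideal M ≠ {0}. Then there exists a permutation σ of R that is not induced by any polynomial over R; that is, there is a bijection σ : R → R such that for every polynomial f ∈ R[x] there is some r ∈ R with f(r) ≠ σ(r). Consequently the group of polynomial permutations of R is a proper subgroup of the symmetric group on R. -/
open Polynomial

theorem exists_non_polynomial_permutation (R : Type*) [CommRing R] [IsLocalRing R]
    [Finite R] (hM : IsLocalRing.maximalIdeal R ≠ ⊥) :
    ∃ σ : Equiv.Perm R, ∀ f : R[X], ∃ r : R, f.eval r ≠ σ r := by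
  obtain ⟨m, hmM, hm0⟩ := Submodule.exists_mem_ne_zero_of_ne_bot hM
  have hmu : ¬ IsUnit m := hmM
  have h1M : m ≠ 1 := by rintro rfl; exact hmu isUnit_one
  have h0 : (0 : R) ≠ m := fun h => hm0 h.symm
  have h01 : (0 : R) ≠ 1 := zero_ne_one
  classical
  refine ⟨Equiv.swap m 1, fun f => ?_⟩
  by_contra hc
  push_neg at hc
  have hfm : f.eval m = 1 := by rw [hc m, Equiv.swap_apply_left]
  have hf0 : f.eval 0 = 0 := by
    rw [hc 0, Equiv.swap_apply_of_ne_of_ne h0 h01]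
  have hdvd : (m - 0) ∣ f.eval m - f.eval 0 := sub_dvd_eval_sub m 0 f
  rw [hfm, hf0, sub_zero, sub_zero] at hdvd
  exact hmu (isUnit_of_dvd_one hdvd)
end
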